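/- arXiv:2307.10871 — 5 statements merged into one kernel-verified Lean document; each statement's English description precedes it below -/
import Mathlib

section
/- Let α̂ and ρ be class-K∞ functions such that id − α̂ is a class-K function and id − ρ is a class-K∞ function, and let S ≥ 0. Let v : ℕ → [0,∞) be a sequence satisfying v(k+1) ≤ v(k) − α̂(v(k)) + S for all k ∈ ℕ. Then there exists a class-KL function β̂ such that v(k) ≤ max{ β̂(v(0), k), α̂⁻¹(ρ⁻¹(S)) } for all k ∈ ℕ, where α̂⁻¹ and ρ⁻¹ denote the inverse functions of α̂ and ρ on [0,∞). -/
open Set Filter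

/-- A function of class K: continuous, strictly increasing on `[0,∞)` and vanishing at 0. -/
def ClassK (f : ℝ → ℝ) : Prop :=
  ContinuousOn f (Set.Ici 0) ∧ StrictMonoOn f (Set.Ici 0) ∧ f 0 = 0

/-- A function of class K∞: class K and unbounded. -/
def ClassKInf (f : ℝ → ℝ) : Prop :=
  ClassK f ∧ Filter.Tendsto f Filter.atTop Filter.atTop

/-- A function of class KL. -/
def ClassKL (b : ℝ → ℝ → ℝ) : Prop :=
  (∀ s ≥ (0:ℝ), ClassK (fun r => b r s)) ∧
  (∀ r ≥ (0:ℝ), AntitoneOn (fun s => b r s) (Set.Ici 0) ∧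
    Filter.Tendsto (fun s => b r s) Filter.atTop (nhds 0))

/-- `g` is the inverse on `[0,∞)` of the class-K∞ function `f`. -/
def InverseOnNonneg (f g : ℝ → ℝ) : Prop :=
  ∀ r ≥ (0:ℝ), 0 ≤ g r ∧ f (g r) = r ∧ g (f r) = r

lemma kl_of_seq (p : ℕ → ℝ) (hpos : ∀ k, 0 < p k) (hanti : Antitone p)
    (htend : Filter.Tendsto p Filter.atTop (nhds 0)) :
    ClassKL (fun r s => r * p ⌊s⌋₊) := by
  constructor
  · intro s _
    refine ⟨(continuous_id.mul continuous_const).continuousOn, ?_, by simp⟩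
    intro a _ b _ hab
    exact mul_lt_mul_of_pos_right hab (hpos _)
  · intro r hr
    constructor
    · intro s _ t _ hst
      exact mul_le_mul_of_nonneg_left (hanti (Nat.floor_mono hst)) hr
    · have h1 : Filter.Tendsto (fun s : ℝ => p ⌊s⌋₊) Filter.atTop (nhds 0) :=
        htend.comp tendsto_nat_floor_atTop
      simpa using h1.const_mul r

lemma halfpow_anti : Antitone (fun k : ℕ => ((1:ℝ)/2)^k) :=
  antitone_nat_of_succ_le fun n =>
    pow_le_pow_of_le_one (by norm_num) (by norm_num) (Nat.le_succ n)

lemma halfpow_tend : Filter.Tendsto (fun k : ℕ => ((1:ℝ)/2)^k) Filter.atTop (nhds 0) :=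
  tendsto_pow_atTop_nhds_zero_of_lt_one (by norm_num) (by norm_num)

/-- Lemma 7 (ISS bound) for an abstract nonnegative sequence. -/
theorem iss_bound_of_decrease
    (alphaHat rho : ℝ → ℝ)
    (hHat : ClassKInf alphaHat) (hrho : ClassKInf rho)
    (hidHat : ClassK (fun r => r - alphaHat r))
    (hidrho : ClassKInf (fun r => r - rho r))
    (S : ℝ) (hS : 0 ≤ S)
    (alphaHatInv rhoInv : ℝ → ℝ)
    (hHatInv : InverseOnNonneg alphaHat alphaHatInv)
    (hrhoInv : InverseOnNonneg rho rhoInv)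
    (v : ℕ → ℝ) (hvnonneg : ∀ k : ℕ, 0 ≤ v k)
    (hrec : ∀ k : ℕ, v (k+1) ≤ v k - alphaHat (v k) + S) :
    ∃ betaHat : ℝ → ℝ → ℝ, ClassKL betaHat ∧
      ∀ k : ℕ, v k ≤ max (betaHat (v 0) (k : ℝ)) (alphaHatInv (rhoInv S)) := by
  obtain ⟨⟨hαc, hαm, hα0⟩, hαtop⟩ := hHat
  obtain ⟨⟨hρc, hρm, hρ0⟩, hρtop⟩ := hrho
  obtain ⟨hic, him, hi0⟩ := hidHat
  obtain ⟨⟨hjc, hjm, hj0⟩, hjtop⟩ := hidrho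
  set R := rhoInv S with hRdef
  obtain ⟨hRnn, hρR, -⟩ := hrhoInv S hS
  set M := alphaHatInv R with hMdef
  obtain ⟨hMnn, hαM, -⟩ := hHatInv R hRnn
  have hαmono := hαm.monotoneOn
  have himono := him.monotoneOn
  have hjmono := hjm.monotoneOn
  -- ρ S ≤ S
  have hρSleS : rho S ≤ S := by
    have h := hjmono (self_mem_Ici) (mem_Ici.2 hS) hS
    simp only [hj0] at h ⊢
    have h0 : (0:ℝ) - rho 0 = 0 := hj0
    linarith
  -- S ≤ R
  have hSR : S ≤ R := by
    by_contra h
    push_neg at h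
    have := hρm (mem_Ici.2 hRnn) (mem_Ici.2 hS) h
    rw [hρR] at this
    linarith
  -- S < R when 0 < S
  have hSR' : 0 < S → S < R := by
    intro hSpos
    have hρS : rho S < S := by
      have h := hjm (self_mem_Ici) (mem_Ici.2 hS) hSpos
      have h0 : (0:ℝ) - rho 0 = 0 := hj0
      simp only at h
      linarith
    by_contra h
    push_neg at h
    have h2 := hρm.monotoneOn (mem_Ici.2 hRnn) (mem_Ici.2 hS) h
    rw [hρR] at h2
    linarith
  -- invariance
  have hstep : ∀ k, v k ≤ M → v (k+1) ≤ M := by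
    intro k hk
    have h1 := himono (mem_Ici.2 (hvnonneg k)) (mem_Ici.2 hMnn) hk
    simp only at h1
    rw [hαM] at h1
    have := hrec k
    linarith
  have hstepped : ∀ n, v n ≤ M → ∀ d, v (n + d) ≤ M := by
    intro n hn d
    induction d with
    | zero => exact hn
    | succ d ih => exact hstep _ ih
  -- strict decrease above M
  have hdec : ∀ k, M < v k → v (k+1) < v k ∧ v (k+1) ≤ v k - R + S := by
    intro k hk
    have hα : R < alphaHat (v k) := by
      rw [← hαM]
      exact hαm (mem_Ici.2 hMnn) (mem_Ici.2 (hvnonneg k)) hk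
    have := hrec k
    constructor <;> linarith
  have hseg : ∀ k, M < v (k+1) → M < v k := by
    intro k h
    by_contra h2
    push_neg at h2
    exact absurd h (not_lt.2 (hstep k h2))
  by_cases hA : ∀ k, v k ≤ M
  · -- trivial case: always below M
    refine ⟨fun r s => r * ((1:ℝ)/2)^(⌊s⌋₊),
      kl_of_seq _ (fun k => pow_pos (by norm_num) k) halfpow_anti halfpow_tend, ?_⟩
    intro k
    exact le_trans (hA k) (le_max_right _ _)
  · push_neg at hA
    have hv0 : M < v 0 := by
      by_contra h
      push_neg at h
      obtain ⟨k0, hk0⟩ := hA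
      exact absurd (hstepped 0 h k0) (not_le.2 (by simpa using hk0))
    have hv0pos : 0 < v 0 := lt_of_le_of_lt hMnn hv0
    set q : ℕ → ℝ := fun k => if M < v k then v k / v 0 else 0 with hqdef
    have hq0 : ∀ k, 0 ≤ q k := by
      intro k
      simp only [hqdef]
      split_ifs
      · exact div_nonneg (hvnonneg k) hv0pos.le
      · exact le_refl 0
    have hqanti : ∀ k, q (k+1) ≤ q k := by
      intro k
      by_cases h : M < v (k+1)
      · have hk := hseg k h
        simp only [hqdef, if_pos h, if_pos hk]
        exact (div_le_div_iff_of_pos_right hv0pos).2 (hdec k hk).1.le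
      · simp only [hqdef, if_neg h]
        exact hq0 k
    have hqtend : Filter.Tendsto q Filter.atTop (nhds 0) := by
      by_cases hN : ∃ N, v N ≤ M
      · obtain ⟨N, hNle⟩ := hN
        have heq : ∀ k ≥ N, q k = (0:ℝ) := by
          intro k hk
          obtain ⟨d, rfl⟩ := Nat.exists_eq_add_of_le hk
          simp only [hqdef, if_neg (not_lt.2 (hstepped N hNle d))]
        refine Filter.Tendsto.congr' ?_ tendsto_const_nhds
        exact Filter.eventually_atTop.2 ⟨N, fun k hk => (heq k hk).symm⟩
      · push_neg at hN
        by_cases hSpos : 0 < S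
        · exfalso
          have hδ : 0 < R - S := sub_pos.2 (hSR' hSpos)
          have hlin : ∀ n : ℕ, v n ≤ v 0 - n * (R - S) := by
            intro n
            induction n with
            | zero => simp
            | succ n ih =>
              have := (hdec n (hN n)).2
              push_cast
              linarith
          obtain ⟨n, hn⟩ := exists_nat_gt (v 0 / (R - S))
          have h2 : v 0 < (n:ℝ) * (R - S) := by
            rw [← div_lt_iff₀ hδ] at *
            exact hn
          have := hlin n
          linarith [hvnonneg n]
        · -- S = 0
          have hS0 : S = 0 := le_antisymm (not_lt.1 hSpos) hS
          have hR0 : R = 0 := by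
            have h1 := (hrhoInv 0 le_rfl).2.2
            rw [hρ0] at h1
            rw [hRdef, hS0, h1]
          have hM0 : M = 0 := by
            have h1 := (hHatInv 0 le_rfl).2.2
            rw [hα0] at h1
            rw [hMdef, hR0, h1]
          have hαnn : ∀ k, 0 ≤ alphaHat (v k) := by
            intro k
            rw [← hα0]
            exact hαmono self_mem_Ici (mem_Ici.2 (hvnonneg k)) (hvnonneg k)
          have hvanti : Antitone v := antitone_nat_of_succ_le fun n => by
            have := hrec n
            have := hαnn n
            linarith
          have hbdd : BddBelow (Set.range v) := ⟨0, by rintro x ⟨n, rfl⟩; exact hvnonneg n⟩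
          set L := ⨅ n, v n with hLdef
          have hLtend : Filter.Tendsto v Filter.atTop (nhds L) :=
            tendsto_atTop_ciInf hvanti hbdd
          have hL0 : 0 ≤ L := le_ciInf fun n => hvnonneg n
          have hLeq : L = 0 := by
            by_contra hne
            have hLpos : 0 < L := lt_of_le_of_ne hL0 (Ne.symm hne)
            have hαL : 0 < alphaHat L := by
              have := hαm self_mem_Ici (mem_Ici.2 hL0) hLpos
              rwa [hα0] at this
            have hvge : ∀ n, L ≤ v n := fun n => ciInf_le hbdd n
            have hlin : ∀ n : ℕ, v n ≤ v 0 - n * alphaHat L := by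
              intro n
              induction n with
              | zero => simp
              | succ n ih =>
                have h1 := hrec n
                have h2 : alphaHat L ≤ alphaHat (v n) :=
                  hαmono (mem_Ici.2 hL0) (mem_Ici.2 (hvnonneg n)) (hvge n)
                push_cast
                linarith
            obtain ⟨n, hn⟩ := exists_nat_gt (v 0 / alphaHat L)
            rw [div_lt_iff₀ hαL] at hn
            have := hlin n
            linarith [hvnonneg n]
          have h3 : Filter.Tendsto (fun k => v k / v 0) Filter.atTop (nhds 0) := by
            have := hLtend.div_const (v 0)
            rwa [hLeq, zero_div] at this
          exact h3.congr fun k => (if_pos (hN k)).symm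
    set p : ℕ → ℝ := fun k => max (q k) (((1:ℝ)/2)^k) with hpdef
    have hppos : ∀ k, 0 < p k := fun k =>
      lt_of_lt_of_le (pow_pos (by norm_num) k) (le_max_right _ _)
    have hpanti : Antitone p := antitone_nat_of_succ_le fun n =>
      max_le_max (hqanti n) (halfpow_anti (Nat.le_succ n))
    have hptend : Filter.Tendsto p Filter.atTop (nhds 0) := by
      have := hqtend.max halfpow_tend
      rw [max_self] at this
      exact this
    refine ⟨fun r s => r * p ⌊s⌋₊, kl_of_seq p hppos hpanti hptend, ?_⟩
    intro k
    rcases le_or_gt (v k) M with h | h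
    · exact le_trans h (le_max_right _ _)
    · refine le_trans ?_ (le_max_left _ _)
      have hfl : (⌊(k:ℝ)⌋₊ : ℕ) = k := Nat.floor_natCast k
      simp only [hfl]
      have h1 : v k / v 0 ≤ p k := by
        have : q k = v k / v 0 := if_pos h
        rw [← this]
        exact le_max_left _ _
      calc v k = v 0 * (v k / v 0) := by field_simp
        _ ≤ v 0 * p k := mul_le_mul_of_nonneg_left h1 hv0pos.le
end

section
/- Let α̂ and ρ be class-K∞ functions such that id − α̂ is a class-K function and id − ρ is a class-K∞ function, let S ≥ 0, and set b = α̂⁻¹(ρ⁻¹(S)). Let v : ℕ → [0,∞) be a sequence satisfying v(k+1) ≤ v(k) − α̂(v(k)) + S for all k ∈ ℕ. If v(k₀) ≤ b for some k₀ ∈ ℕ, then v(k) ≤ b for all k ≥ k₀. -/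
open Set Filter

/-- The Claim inside the proof of Lemma 7: the sublevel set `{v ≤ b}`,
with `b = α̂⁻¹(ρ⁻¹(S))`, is forward invariant for the sequence. -/
theorem sublevel_forward_invariant
    (alphaHat rho : ℝ → ℝ)
    (hHat : ClassKInf alphaHat) (hrho : ClassKInf rho)
    (hidHat : ClassK (fun r => r - alphaHat r))
    (hidrho : ClassKInf (fun r => r - rho r))
    (S : ℝ) (hS : 0 ≤ S)
    (alphaHatInv rhoInv : ℝ → ℝ)
    (hHatInv : InverseOnNonneg alphaHat alphaHatInv)
    (hrhoInv : InverseOnNonneg rho rhoInv)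
    (b : ℝ) (hb : b = alphaHatInv (rhoInv S))
    (v : ℕ → ℝ) (hvnonneg : ∀ k : ℕ, 0 ≤ v k)
    (hrec : ∀ k : ℕ, v (k+1) ≤ v k - alphaHat (v k) + S)
    (k₀ : ℕ) (hk₀ : v k₀ ≤ b) :
    ∀ k : ℕ, k₀ ≤ k → v k ≤ b := by
  obtain ⟨hr0, hrS, _⟩ := hrhoInv S hS
  obtain ⟨hb0', hab, _⟩ := hHatInv (rhoInv S) hr0
  have hb0 : 0 ≤ b := hb ▸ hb0'
  have hab' : alphaHat b = rhoInv S := by rw [hb]; exact hab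
  have hSle : S ≤ alphaHat b := by
    rw [hab']
    have h0 : (0:ℝ) - rho 0 = 0 := hidrho.1.2.2
    have hmono := hidrho.1.2.1.monotoneOn (Set.self_mem_Ici) (Set.mem_Ici.2 hr0) hr0
    rw [h0] at hmono
    nlinarith [hrS]
  intro k hk
  induction k, hk using Nat.le_induction with
  | base => exact hk₀
  | succ n hn ih =>
    have hmono := hidHat.2.1.monotoneOn (Set.mem_Ici.2 (hvnonneg n)) (Set.mem_Ici.2 hb0) ih
    have := hrec n
    linarith
end

section
/- Let A be a real n×n matrix, B a real n×m matrix, K a real m×n matrix, Z ⊆ ℝ^n × ℝ^m, and Ω ⊆ ℝ^n × ℝ^n × ℝ^m a set such that for every (x, x_a, u_a) ∈ Ω one has (x, K(x − x_a) + u_a) ∈ Z and (A x + B(K(x − x_a) + u_a), x_a, u_a) ∈ Ω. Fix a horizon N ≥ 1 and say that a state x ∈ ℝ^n is feasible if there exist controls u(0), …, u(N−1) ∈ ℝ^m and a pair (x_a, u_a) ∈ ℝ^n × ℝ^m such that the states defined by x(0) = x and x(j+1) = A x(j) + B u(j) satisfy (x(j), u(j)) ∈ Z for all j ∈ {0, …,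 N−1} and (x(N), x_a, u_a) ∈ Ω. Then for every feasible state x with feasibility witness (u(0), …, u(N−1), x_a, u_a), the successor state x⁺ = A x + B u(0) is also feasible. -/
/-- Lemma 3 (recursive feasibility): if `x` is `N`-step feasible to the invariant
set `Ω` for tracking, then so is its closed-loop successor `A x + B u(0)`. -/
theorem recursive_feasibility
    (n m N : ℕ) (hN : 1 ≤ N)
    (A : Matrix (Fin n) (Fin n) ℝ) (B : Matrix (Fin n) (Fin m) ℝ)
    (K : Matrix (Fin m) (Fin n) ℝ)
    (Z : Set ((Fin n → ℝ) × (Fin m → ℝ)))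
    (Ω : Set ((Fin n → ℝ) × (Fin n → ℝ) × (Fin m → ℝ)))
    (hΩ : ∀ p ∈ Ω,
      (p.1, K.mulVec (p.1 - p.2.1) + p.2.2) ∈ Z ∧
      (A.mulVec p.1 + B.mulVec (K.mulVec (p.1 - p.2.1) + p.2.2), p.2.1, p.2.2) ∈ Ω)
    (x : Fin n → ℝ) (u : ℕ → Fin m → ℝ) (xa : Fin n → ℝ) (ua : Fin m → ℝ)
    (xtraj : ℕ → Fin n → ℝ)
    (h0 : xtraj 0 = x)
    (hdyn : ∀ j : ℕ, xtraj (j+1) = A.mulVec (xtraj j) + B.mulVec (u j))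
    (hZ : ∀ j < N, (xtraj j, u j) ∈ Z)
    (hterm : (xtraj N, xa, ua) ∈ Ω) :
    ∃ (u' : ℕ → Fin m → ℝ) (xa' : Fin n → ℝ) (ua' : Fin m → ℝ) (x' : ℕ → Fin n → ℝ),
      x' 0 = A.mulVec x + B.mulVec (u 0) ∧
      (∀ j : ℕ, x' (j+1) = A.mulVec (x' j) + B.mulVec (u' j)) ∧
      (∀ j < N, (x' j, u' j) ∈ Z) ∧
      (x' N, xa', ua') ∈ Ω := by
  set uK : Fin m → ℝ := K.mulVec (xtraj N - xa) + ua with huK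
  set u' : ℕ → Fin m → ℝ := fun j => if j + 1 < N then u (j+1) else uK with hu'
  set x' : ℕ → Fin n → ℝ := fun j => Nat.rec (xtraj 1)
    (fun k xk => A.mulVec xk + B.mulVec (u' k)) j with hx'
  have hdyn' : ∀ j : ℕ, x' (j+1) = A.mulVec (x' j) + B.mulVec (u' j) := fun j => rfl
  have hshift : ∀ j < N, x' j = xtraj (j+1) := by
    intro j hj
    induction j with
    | zero => rfl
    | succ k ih =>
      have hk : k < N := Nat.lt_of_succ_lt hj
      rw [hdyn', ih hk, hdyn (k+1)]
      have : u' k = u (k+1) := by simp [hu', hj]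
      rw [this]
  constructor
  constructor
  constructor
  refine ⟨x', ?_, hdyn', ?_, ?_⟩
  · show x' 0 = _
    rw [show x' 0 = xtraj 1 from rfl, hdyn 0, h0]
  · intro j hj
    rcases Nat.lt_or_ge (j+1) N with h | h
    · rw [hshift j hj]
      have : u' j = u (j+1) := by simp [hu', h]
      rw [this]
      exact hZ (j+1) h
    · have hjN : j + 1 = N := le_antisymm hj h
      have : u' j = uK := by simp [hu', hjN.le, Nat.not_lt.mpr (le_of_eq hjN.symm)]
      rw [hshift j hj, this, hjN]
      exact (hΩ _ hterm).1
  · obtain ⟨M, hM⟩ : ∃ M, N = M + 1 := ⟨N - 1, (Nat.succ_pred_eq_of_pos hN).symm⟩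
    subst hM
    rw [hdyn', hshift M (Nat.lt_succ_self M)]
    have : u' M = uK := by simp [hu']
    rw [this, huK]
    exact (hΩ _ hterm).2
end

section
/- Let A be a real n×n matrix, B a real n×m matrix, K a real m×n matrix, and let Q, R, P be real symmetric matrices (of sizes n×n, m×m, n×n) satisfying the Lyapunov equation P = (A + BK)ᵀ P (A + BK) + Q + Kᵀ R K. Let (x_a, u_a) ∈ ℝ^n × ℝ^m satisfy A x_a + B u_a = x_a. Fix N ≥ 1, and for a state z ∈ ℝ^n and controls v(0), …, v(N−1) ∈ ℝ^m define the cost J(z; v) = Σ_{j=0}^{N−1} [ (x̄(j) − x_a)ᵀ Q (x̄(j) − x_a) + (v(j) − u_a)ᵀ R (v(j) − u_a) ] + (x̄(N) − x_a)ᵀ P (x̄(N) − x_a), where x̄(0) = z and x̄(j+1) = A x̄(j) + B v(j). Given controls u(0), …, u(N−1) and the states x(0), …, x(N) generated from x(0) by u, define the shifted controls ũ(j) = u(j+1) for j ∈ {0, …, N−2} and ũ(N−1) = K(x(N) − x_a) + u_a. Then J(x(1); ũ) = J(x(0); u) − (x(0) − x_a)ᵀ Q (x(0) − x_a) − (u(0)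 − u_a)ᵀ R (u(0) − u_a). -/
open Matrix
/-- The quadratic form `v ↦ vᵀ M v`. -/
noncomputable def quad {n : ℕ} (M : Matrix (Fin n) (Fin n) ℝ) (v : Fin n → ℝ) : ℝ :=
  v ⬝ᵥ M.mulVec v

lemma quad_add {n : ℕ} (M M' : Matrix (Fin n) (Fin n) ℝ) (v : Fin n → ℝ) :
    quad (M + M') v = quad M v + quad M' v := by
  simp [quad, Matrix.add_mulVec, dotProduct_add]

lemma quad_conj {n k : ℕ} (M : Matrix (Fin n) (Fin n) ℝ) (C : Matrix (Fin n) (Fin k) ℝ)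
    (v : Fin k → ℝ) : quad (Cᵀ * M * C) v = quad M (C.mulVec v) := by
  simp [quad, ← Matrix.mulVec_mulVec, Matrix.dotProduct_mulVec, Matrix.vecMul_transpose]

/-- The exact cost-shift identity underlying Lemma 6 (decreasing property):
applying the shifted control sequence completed by the terminal feedback law
from the successor state decreases the finite-horizon tracking cost by exactly
the first stage cost. -/
theorem cost_shift_identity
    (n m N : ℕ) (hN : 1 ≤ N)
    (A : Matrix (Fin n) (Fin n) ℝ) (B : Matrix (Fin n) (Fin m) ℝ)
    (K : Matrix (Fin m) (Fin n) ℝ)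
    (Q P : Matrix (Fin n) (Fin n) ℝ) (R : Matrix (Fin m) (Fin m) ℝ)
    (hQ : Q.IsSymm) (hR : R.IsSymm) (hP : P.IsSymm)
    (hLyap : P = (A + B * K)ᵀ * P * (A + B * K) + Q + Kᵀ * R * K)
    (xa : Fin n → ℝ) (ua : Fin m → ℝ)
    (heq : A.mulVec xa + B.mulVec ua = xa)
    (u : ℕ → Fin m → ℝ) (x : ℕ → Fin n → ℝ)
    (hdyn : ∀ j : ℕ, x (j+1) = A.mulVec (x j) + B.mulVec (u j))
    (ut : ℕ → Fin m → ℝ)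
    (hut1 : ∀ j : ℕ, j < N - 1 → ut j = u (j+1))
    (hut2 : ut (N-1) = K.mulVec (x N - xa) + ua)
    (xt : ℕ → Fin n → ℝ)
    (hxt0 : xt 0 = x 1)
    (hxtdyn : ∀ j : ℕ, xt (j+1) = A.mulVec (xt j) + B.mulVec (ut j)) :
    (∑ j ∈ Finset.range N, (quad Q (xt j - xa) + quad R (ut j - ua))) + quad P (xt N - xa)
      = (∑ j ∈ Finset.range N, (quad Q (x j - xa) + quad R (u j - ua))) + quad P (x N - xa)
        - quad Q (x 0 - xa) - quad R (u 0 - ua) := by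
  obtain ⟨N', rfl⟩ : ∃ N', N = N' + 1 := ⟨N - 1, by omega⟩
  simp only [Nat.add_sub_cancel] at hut1 hut2
  -- shifted states coincide with original states
  have hxts : ∀ j, j ≤ N' → xt j = x (j+1) := by
    intro j
    induction j with
    | zero => intro _; exact hxt0
    | succ k ih =>
      intro h
      rw [hxtdyn, ih (by omega), hut1 k (by omega), ← hdyn]
  -- terminal state of shifted trajectory
  have hxtN : xt (N'+1) - xa = (A + B * K).mulVec (x (N'+1) - xa) := by
    have h1 : xt (N'+1) = A.mulVec (x (N'+1)) + B.mulVec (K.mulVec (x (N'+1) - xa) + ua) := by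
      rw [hxtdyn, hxts N' le_rfl, hut2]
    have heq' : B.mulVec ua = xa - A.mulVec xa := by rw [eq_sub_iff_add_eq, add_comm]; exact heq
    rw [h1, Matrix.mulVec_add, heq']
    simp only [Matrix.add_mulVec, Matrix.mulVec_sub, Matrix.mulVec_mulVec]
    abel
  have hKe : ut N' - ua = K.mulVec (x (N'+1) - xa) := by
    rw [hut2]; abel
  -- terminal cost identity from the Lyapunov equation
  have hterm : quad P (x (N'+1) - xa)
      = quad P (xt (N'+1) - xa) + quad Q (x (N'+1) - xa) + quad R (K.mulVec (x (N'+1) - xa)) := by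
    conv_lhs => rw [hLyap]
    rw [hxtN, quad_add, quad_add, quad_conj, quad_conj]
  rw [Finset.sum_range_succ, Finset.sum_range_succ' (fun j => quad Q (x j - xa) + quad R (u j - ua))]
  have hsum : ∑ j ∈ Finset.range N', (quad Q (xt j - xa) + quad R (ut j - ua))
      = ∑ j ∈ Finset.range N', (quad Q (x (j+1) - xa) + quad R (u (j+1) - ua)) := by
    refine Finset.sum_congr rfl fun j hj => ?_
    rw [Finset.mem_range] at hj
    rw [hxts j (by omega), hut1 j hj]
  rw [hsum, hxts N' le_rfl, hKe, hterm]
  ring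
end

section
/- Let A be a real n×n matrix, B a real n×m matrix, Q a real symmetric positive semidefinite n×n matrix, and R a real symmetric positive definite m×m matrix. Assume the observability condition: the only vector z ∈ ℝ^n with Q A^j z = 0 for all j ∈ {0, …, n−1} is z = 0. Let N ≥ n. Then there exists a constant c > 0 such that for every initial state x₀ ∈ ℝ^n and every control sequence u(0), …, u(N−1) ∈ ℝ^m, Σ_{j=0}^{N−1} [ x(j)ᵀ Q x(j) + u(j)ᵀ R u(j) ] ≥ c ‖x₀‖², where x(0) = x₀ and x(j+1) = A x(j) + B u(j). -/
open Matrix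

/-!
The cost is a continuous function of the initial state and the `N` controls that scales
quadratically and vanishes only at zero: `R ≻ 0` forces the controls to vanish, after which the
states are `Aʲ x₀` and observability forces `x₀ = 0`. Its minimum on the unit sphere of this
finite-dimensional space is therefore a positive constant `c`, and homogeneity spreads it to
`c ‖(x₀, u)‖² ≤ cost` everywhere; taking the Euclidean norm on the state makes
`c ‖x₀‖² ≤ c ‖(x₀, u)‖²` the required bound.
-/

open Finset Metric

theorem exists_pos_mul_norm_sq_le_of_homogeneous {E : Type*} [NormedAddCommGroup E]
    [NormedSpace ℝ E] [ProperSpace E] {F : E → ℝ} (hF : Continuous F)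
    (hsmul : ∀ (t : ℝ) (v : E), F (t • v) = t ^ 2 * F v) (hpos : ∀ v, v ≠ 0 → 0 < F v) :
    ∃ c, 0 < c ∧ ∀ v, c * ‖v‖ ^ 2 ≤ F v := by
  have hF0 : F 0 = 0 := by simpa using hsmul 0 0
  rcases subsingleton_or_nontrivial E with hE | hE
  · exact ⟨1, one_pos, fun v => by simp [Subsingleton.elim v 0, hF0]⟩
  obtain ⟨v₀, hv₀, hmin⟩ := (isCompact_sphere (0 : E) 1).exists_isMinOn
    (NormedSpace.sphere_nonempty.2 zero_le_one) hF.continuousOn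
  refine ⟨F v₀, hpos v₀ (ne_zero_of_mem_unit_sphere ⟨v₀, hv₀⟩), fun v => ?_⟩
  rcases eq_or_ne v 0 with rfl | hv
  · simp [hF0]
  have hv' : ‖v‖ ≠ 0 := norm_ne_zero_iff.2 hv
  calc F v₀ * ‖v‖ ^ 2 ≤ F (‖v‖⁻¹ • v) * ‖v‖ ^ 2 := by
        gcongr
        exact hmin (by simp [norm_smul, hv'])
    _ = F v := by rw [hsmul]; field_simp

section ZeroExtend

variable {α : Type*} [Zero α] {N : ℕ}

def zeroExtend (w : Fin N → α) (j : ℕ) : α :=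
  if h : j < N then w ⟨j, h⟩ else 0

theorem zeroExtend_of_lt (w : Fin N → α) {j : ℕ} (hj : j < N) : zeroExtend w j = w ⟨j, hj⟩ :=
  dif_pos hj

theorem zeroExtend_smul {M : Type*} [SMulZeroClass M α] (t : M) (w : Fin N → α) :
    zeroExtend (t • w) = t • zeroExtend w := by
  funext j
  by_cases hj : j < N <;> simp [zeroExtend, hj]

theorem continuous_zeroExtend [TopologicalSpace α] :
    Continuous (zeroExtend : (Fin N → α) → ℕ → α) :=
  continuous_pi fun j => by
    by_cases hj : j < N
    · simpa [zeroExtend, hj] using continuous_apply (⟨j, hj⟩ : Fin N)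
    · simpa [zeroExtend, hj] using continuous_const

end ZeroExtend

section Trajectory

variable {ι κ : Type*} [Fintype ι] [Fintype κ] (A : Matrix ι ι ℝ) (B : Matrix ι κ ℝ)

def trajectory (x₀ : ι → ℝ) (u : ℕ → κ → ℝ) : ℕ → ι → ℝ
  | 0 => x₀
  | j + 1 => A *ᵥ trajectory x₀ u j + B *ᵥ u j

theorem eq_trajectory {x : ℕ → ι → ℝ} {x₀ : ι → ℝ} {u : ℕ → κ → ℝ} (h0 : x 0 = x₀)
    (hsucc : ∀ j, x (j + 1) = A *ᵥ x j + B *ᵥ u j) : x = trajectory A B x₀ u := by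
  funext j
  induction j with
  | zero => exact h0
  | succ j ih => rw [hsucc, ih]; rfl

theorem trajectory_congr {x₀ : ι → ℝ} {u v : ℕ → κ → ℝ} {j : ℕ} (h : ∀ k < j, u k = v k) :
    trajectory A B x₀ u j = trajectory A B x₀ v j := by
  induction j with
  | zero => rfl
  | succ j ih => simp only [trajectory, ih fun k hk => h k (by omega), h j j.lt_succ_self]

theorem trajectory_smul (t : ℝ) (x₀ : ι → ℝ) (u : ℕ → κ → ℝ) (j : ℕ) :
    trajectory A B (t • x₀) (t • u) j = t • trajectory A B x₀ u j := by
  induction j with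
  | zero => rfl
  | succ j ih => simp only [trajectory, ih, Pi.smul_apply, mulVec_smul, smul_add]

theorem trajectory_zero [DecidableEq ι] (x₀ : ι → ℝ) (j : ℕ) :
    trajectory A B x₀ 0 j = (A ^ j) *ᵥ x₀ := by
  induction j with
  | zero => simp [trajectory]
  | succ j ih => simp [trajectory, ih, pow_succ', mulVec_mulVec]

theorem continuous_trajectory (j : ℕ) :
    Continuous fun p : (ι → ℝ) × (ℕ → κ → ℝ) => trajectory A B p.1 p.2 j := by
  induction j with
  | zero => exact continuous_fst
  | succ j ih =>
    exact (continuous_const.matrix_mulVec ih).add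
      (continuous_const.matrix_mulVec ((continuous_apply j).comp continuous_snd))

end Trajectory

section Quad

variable {n : ℕ} {M : Matrix (Fin n) (Fin n) ℝ}

theorem quad_nonneg (hM : M.PosSemidef) (v : Fin n → ℝ) : 0 ≤ quad M v := by
  simpa [quad] using hM.dotProduct_mulVec_nonneg v

theorem quad_eq_zero_iff (hM : M.PosDef) {v : Fin n → ℝ} : quad M v = 0 ↔ v = 0 := by
  refine ⟨fun h => by_contra fun hv => (hM.dotProduct_mulVec_pos hv).ne' ?_,
    fun h => by simp [quad, h]⟩
  simpa [quad] using h

theorem mulVec_eq_zero_of_quad_eq_zero (hM : M.PosSemidef) {v : Fin n → ℝ} (h : quad M v = 0) :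
    M *ᵥ v = 0 :=
  (hM.dotProduct_mulVec_zero_iff v).1 (by simpa [quad] using h)

theorem quad_smul (M : Matrix (Fin n) (Fin n) ℝ) (t : ℝ) (v : Fin n → ℝ) :
    quad M (t • v) = t ^ 2 * quad M v := by
  simp only [quad, mulVec_smul, dotProduct_smul, smul_dotProduct, smul_eq_mul]
  ring

theorem continuous_quad (M : Matrix (Fin n) (Fin n) ℝ) : Continuous (quad M) :=
  continuous_id.dotProduct (continuous_const.matrix_mulVec continuous_id)

end Quad

section Cost

variable {n m : ℕ} (A : Matrix (Fin n) (Fin n) ℝ) (B : Matrix (Fin n) (Fin m) ℝ)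
  (Q : Matrix (Fin n) (Fin n) ℝ) (R : Matrix (Fin m) (Fin m) ℝ) (N : ℕ)

noncomputable def finiteHorizonCost (x₀ : Fin n → ℝ) (u : ℕ → Fin m → ℝ) : ℝ :=
  ∑ j ∈ range N, (quad Q (trajectory A B x₀ u j) + quad R (u j))

theorem finiteHorizonCost_congr {x₀ : Fin n → ℝ} {u v : ℕ → Fin m → ℝ}
    (h : ∀ k < N, u k = v k) :
    finiteHorizonCost A B Q R N x₀ u = finiteHorizonCost A B Q R N x₀ v :=
  sum_congr rfl fun j hj => by
    rw [trajectory_congr A B fun k hk => h k (hk.trans (mem_range.1 hj)), h j (mem_range.1 hj)]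

theorem finiteHorizonCost_smul (t : ℝ) (x₀ : Fin n → ℝ) (u : ℕ → Fin m → ℝ) :
    finiteHorizonCost A B Q R N (t • x₀) (t • u) = t ^ 2 * finiteHorizonCost A B Q R N x₀ u := by
  simp only [finiteHorizonCost, trajectory_smul, Pi.smul_apply, quad_smul, mul_sum, mul_add]

theorem continuous_finiteHorizonCost :
    Continuous fun p : (Fin n → ℝ) × (ℕ → Fin m → ℝ) => finiteHorizonCost A B Q R N p.1 p.2 :=
  continuous_finsetSum _ fun j _ =>
    ((continuous_quad Q).comp (continuous_trajectory A B j)).add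
      ((continuous_quad R).comp ((continuous_apply j).comp continuous_snd))

variable {Q R}

theorem finiteHorizonCost_nonneg (hQ : Q.PosSemidef) (hR : R.PosSemidef) (x₀ : Fin n → ℝ)
    (u : ℕ → Fin m → ℝ) : 0 ≤ finiteHorizonCost A B Q R N x₀ u :=
  sum_nonneg fun _ _ => add_nonneg (quad_nonneg hQ _) (quad_nonneg hR _)

theorem eq_zero_of_finiteHorizonCost_eq_zero (hQ : Q.PosSemidef) (hR : R.PosDef)
    (hobs : ∀ z : Fin n → ℝ, (∀ j < n, Q *ᵥ ((A ^ j) *ᵥ z) = 0) → z = 0) (hNn : n ≤ N)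
    {x₀ : Fin n → ℝ} {u : ℕ → Fin m → ℝ} (h : finiteHorizonCost A B Q R N x₀ u = 0) :
    x₀ = 0 ∧ ∀ k < N, u k = 0 := by
  have hterm : ∀ j < N, quad Q (trajectory A B x₀ u j) = 0 ∧ quad R (u j) = 0 := fun j hj =>
    (add_eq_zero_iff_of_nonneg (quad_nonneg hQ _) (quad_nonneg hR.posSemidef _)).1
      ((sum_eq_zero_iff_of_nonneg fun j _ =>
        add_nonneg (quad_nonneg hQ _) (quad_nonneg hR.posSemidef _)).1 h j (mem_range.2 hj))
  have hu : ∀ k < N, u k = 0 := fun k hk => (quad_eq_zero_iff hR).1 (hterm k hk).2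
  refine ⟨hobs x₀ fun j hj => ?_, hu⟩
  have hjN : j < N := hj.trans_le hNn
  rw [← trajectory_zero A B x₀ j, ← trajectory_congr A B (v := 0) fun k hk => hu k (hk.trans hjN)]
  exact mulVec_eq_zero_of_quad_eq_zero hQ (hterm j hjN).1

end Cost

/-- Positive definiteness of the finite-horizon cost in the initial state
(the property underlying Lemma 5): under observability of `(Q^{1/2}, A)` and
`R ≻ 0`, the finite-horizon cost with horizon `N ≥ n` admits a positive
quadratic lower bound in the Euclidean norm of the initial state. -/
theorem finite_horizon_cost_lower_bound
    (n m N : ℕ) (hNn : n ≤ N)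
    (A : Matrix (Fin n) (Fin n) ℝ) (B : Matrix (Fin n) (Fin m) ℝ)
    (Q : Matrix (Fin n) (Fin n) ℝ) (R : Matrix (Fin m) (Fin m) ℝ)
    (hQ : Q.PosSemidef) (hR : R.PosDef)
    (hobs : ∀ z : Fin n → ℝ, (∀ j < n, Q.mulVec ((A ^ j).mulVec z) = 0) → z = 0) :
    ∃ c : ℝ, 0 < c ∧
      ∀ (x0 : Fin n → ℝ) (u : ℕ → Fin m → ℝ) (x : ℕ → Fin n → ℝ),
        x 0 = x0 → (∀ j : ℕ, x (j+1) = A.mulVec (x j) + B.mulVec (u j)) →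
        c * (x0 ⬝ᵥ x0) ≤ ∑ j ∈ Finset.range N, (quad Q (x j) + quad R (u j)) := by
  let F : EuclideanSpace ℝ (Fin n) × (Fin N → Fin m → ℝ) → ℝ :=
    fun p => finiteHorizonCost A B Q R N p.1.ofLp (zeroExtend p.2)
  have hF : Continuous F := (continuous_finiteHorizonCost A B Q R N).comp
    ((PiLp.continuous_ofLp 2 _).comp continuous_fst |>.prodMk
      (continuous_zeroExtend.comp continuous_snd))
  have hsmul : ∀ (t : ℝ) p, F (t • p) = t ^ 2 * F p := fun t p => by
    simp only [F, Prod.smul_fst, Prod.smul_snd, WithLp.ofLp_smul, zeroExtend_smul,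
      finiteHorizonCost_smul]
  have hpos : ∀ p, p ≠ 0 → 0 < F p := fun p hp => by
    refine (finiteHorizonCost_nonneg A B N hQ hR.posSemidef _ _).lt_of_ne fun h => hp ?_
    obtain ⟨hx₀, hu⟩ := eq_zero_of_finiteHorizonCost_eq_zero A B N hQ hR hobs hNn h.symm
    exact Prod.ext (by simpa using hx₀)
      (funext fun i => by simpa [zeroExtend_of_lt] using hu i i.isLt)
  obtain ⟨c, hc, hcF⟩ := exists_pos_mul_norm_sq_le_of_homogeneous hF hsmul hpos
  refine ⟨c, hc, fun x0 u x h0 hsucc => ?_⟩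
  obtain rfl := eq_trajectory A B h0 hsucc
  let p : EuclideanSpace ℝ (Fin n) × (Fin N → Fin m → ℝ) := (WithLp.toLp 2 x0, fun j => u j)
  calc c * (x0 ⬝ᵥ x0) = c * ‖p.1‖ ^ 2 := by
        rw [← real_inner_self_eq_norm_sq, EuclideanSpace.inner_eq_star_dotProduct]; simp [p]
    _ ≤ c * ‖p‖ ^ 2 := by gcongr; exact norm_fst_le p
    _ ≤ F p := hcF p
    _ = _ := finiteHorizonCost_congr A B Q R N fun k hk => zeroExtend_of_lt _ hk
end
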